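/- arXiv:2602.21840 — 3 statements merged into one kernel-verified Lean document; each statement's English description precedes it below -/
import Mathlib

section
/- Let n = p_1 · p_2 · ⋯ · p_k be a Carmichael number with distinct prime factors and let h be the number of prime factors p_i with v_2(p_i − 1) = v_2(λ(n)). Then h ≥ 1 and h ≠ k − 1; that is, h ∈ {1, 2, …, k−2, k}. -/
open scoped Classical

/-- The Carmichael lambda function: the least `ℓ > 0` with `a ^ ℓ ≡ 1 (mod n)`
for all `a` coprime to `n`. -/
noncomputable def carmichaelLambda (n : ℕ) : ℕ :=
  sInf {ℓ : ℕ | 0 < ℓ ∧ ∀ a : ℕ, Nat.Coprime a n → a ^ ℓ ≡ 1 [MOD n]}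

/-- A Carmichael number: a composite `n` with `a ^ (n-1) ≡ 1 (mod n)`
for all `a` coprime to `n`. -/
def IsCarmichael (n : ℕ) : Prop :=
  1 < n ∧ ¬ n.Prime ∧ ∀ a : ℕ, Nat.Coprime a n → a ^ (n - 1) ≡ 1 [MOD n]

/-- The Euler liars for `n`, as residues in `{0, …, n-1}` coprime to `n` with
`(a/n) ≡ a ^ ((n-1)/2) (mod n)`. -/
noncomputable def eulerLiars (n : ℕ) : Finset ℕ :=
  (Finset.range n).filter
    (fun a => Nat.Coprime a n ∧ (jacobiSym (a : ℤ) n ≡ (a : ℤ) ^ ((n - 1) / 2) [ZMOD n]))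

open ArithmeticFunction

/-!
For squarefree `n` we have `λ(n) = lcm_{p ∣ n} (p - 1)`, so `v₂(λ(n))` is the largest of the
`v₂(p - 1)` and is attained: `h ≥ 1`. Suppose exactly one prime factor `q` misses it, with
`u = v₂(q - 1) < v₂(λ(n))`. Modulo `2^(u+1)` every other prime factor is `≡ 1`, and so is `n`,
because `λ(n) ∣ n - 1`. Hence `q ≡ n ≡ 1 (mod 2^(u+1))`, contradicting `v₂(q - 1) = u`.
Squarefreeness itself comes from `p ∣ λ(p²)`: were `p² ∣ n`, then `p ∣ λ(n) ∣ n - 1`.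
-/

theorem forall_coprime_pow_modEq_one_iff {n ℓ : ℕ} [NeZero n] :
    (∀ a : ℕ, a.Coprime n → a ^ ℓ ≡ 1 [MOD n]) ↔ ∀ u : (ZMod n)ˣ, u ^ ℓ = 1 := by
  constructor
  · intro h u
    have hu := (ZMod.natCast_eq_natCast_iff _ _ _).mpr (h _ (ZMod.val_coe_unit_coprime u))
    push_cast at hu
    rw [ZMod.natCast_zmod_val] at hu
    exact Units.ext (by simpa using hu)
  · intro h a ha
    rw [← ZMod.natCast_eq_natCast_iff]
    simpa using congrArg Units.val (h (ZMod.unitOfCoprime a ha))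

theorem carmichaelLambda_eq_carmichael {n : ℕ} (hn : n ≠ 0) :
    carmichaelLambda n = carmichael n := by
  have : NeZero n := ⟨hn⟩
  simp only [carmichaelLambda, carmichael_eq_exponent hn, Monoid.exponent_eq_sInf,
    forall_coprime_pow_modEq_one_iff]

theorem carmichael_prime {p : ℕ} (hp : p.Prime) : carmichael p = p - 1 := by
  rcases eq_or_ne p 2 with rfl | hp2
  · simpa using carmichael_two_pow_of_le_two (n := 1) (by norm_num)
  · simpa [Nat.totient_prime hp] using carmichael_pow_of_prime_ne_two 1 hp hp2

theorem prime_dvd_carmichael_sq {p : ℕ} (hp : p.Prime) : p ∣ carmichael (p ^ 2) := by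
  rcases eq_or_ne p 2 with rfl | hp2
  · rw [carmichael_two_pow_of_le_two le_rfl]; norm_num
  · rw [carmichael_pow_of_prime_ne_two 2 hp hp2, Nat.totient_prime_pow hp two_pos]
    exact dvd_mul_of_dvd_left (dvd_pow_self p one_ne_zero) _

theorem squarefree_of_carmichael_dvd_sub_one {n : ℕ} (hn : n ≠ 0) (h : carmichael n ∣ n - 1) :
    Squarefree n := by
  rw [Nat.squarefree_iff_prime_squarefree]
  intro p hp hpp
  have hpn : p ∣ n - 1 :=
    (prime_dvd_carmichael_sq hp).trans ((carmichael_dvd (by rwa [sq])).trans h)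
  have : p ∣ n - (n - 1) := Nat.dvd_sub ((dvd_mul_right p p).trans hpp) hpn
  exact hp.not_dvd_one (by rwa [Nat.sub_sub_self (Nat.one_le_iff_ne_zero.mpr hn)] at this)

theorem carmichael_of_squarefree {n : ℕ} (hn : Squarefree n) :
    carmichael n = n.primeFactors.lcm (· - 1) := by
  have : NeZero n := ⟨hn.ne_zero⟩
  rw [carmichael_factorization]
  refine Finset.lcm_congr rfl fun p hp => ?_
  have hp' := Nat.prime_of_mem_primeFactors hp
  rw [Nat.factorization_eq_one_of_squarefree hn hp' (Nat.dvd_of_mem_primeFactors hp), pow_one,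
    carmichael_prime hp']

theorem modEq_one_of_mul_prod_modEq_one {m q : ℕ} {s : Finset ℕ}
    (hs : ∀ p ∈ s, p ≡ 1 [MOD m]) (h : q * ∏ p ∈ s, p ≡ 1 [MOD m]) : q ≡ 1 [MOD m] := by
  simpa using ((Nat.ModEq.prod hs).mul_left q).symm.trans h

theorem padicValNat_finset_lcm {ι : Type*} {s : Finset ι} {f : ι → ℕ} (hf : ∀ i ∈ s, f i ≠ 0)
    (p : ℕ) [hp : Fact p.Prime] :
    padicValNat p (s.lcm f) = s.sup fun i => padicValNat p (f i) := by
  simp only [← Nat.factorization_def _ hp.out]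
  exact Finset.factorization_lcm hf p

namespace IsCarmichael

variable {n : ℕ}

theorem ne_zero (hc : IsCarmichael n) : n ≠ 0 :=
  (zero_lt_one.trans hc.1).ne'

theorem carmichael_dvd_sub_one (hc : IsCarmichael n) : carmichael n ∣ n - 1 := by
  have : NeZero n := ⟨hc.ne_zero⟩
  rw [carmichael_eq_exponent hc.ne_zero]
  exact Monoid.exponent_dvd_of_forall_pow_eq_one (forall_coprime_pow_modEq_one_iff.mp hc.2.2)

theorem squarefree (hc : IsCarmichael n) : Squarefree n :=
  squarefree_of_carmichael_dvd_sub_one hc.ne_zero hc.carmichael_dvd_sub_one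

theorem padicValNat_two_carmichaelLambda (hc : IsCarmichael n) :
    padicValNat 2 (carmichaelLambda n) = n.primeFactors.sup fun p => padicValNat 2 (p - 1) := by
  rw [carmichaelLambda_eq_carmichael hc.ne_zero, carmichael_of_squarefree hc.squarefree]
  exact padicValNat_finset_lcm (fun p hp => by
    have := (Nat.prime_of_mem_primeFactors hp).two_le; omega) 2

theorem padicValNat_two_sub_one_eq_of_forall_ne (hc : IsCarmichael n) {q : ℕ}
    (hq : q ∈ n.primeFactors)
    (hrest : ∀ p ∈ n.primeFactors, p ≠ q →
      padicValNat 2 (p - 1) = padicValNat 2 (carmichaelLambda n)) :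
    padicValNat 2 (q - 1) = padicValNat 2 (carmichaelLambda n) := by
  set v := padicValNat 2 (carmichaelLambda n)
  set u := padicValNat 2 (q - 1)
  have hqp := Nat.prime_of_mem_primeFactors hq
  have hle : u ≤ v := by
    rw [show v = _ from hc.padicValNat_two_carmichaelLambda]
    exact Finset.le_sup (f := fun p => padicValNat 2 (p - 1)) hq
  by_contra hne
  have hlt : u < v := lt_of_le_of_ne hle hne
  have modEq_of_dvd : ∀ a, 1 ≤ a → 2 ^ v ∣ a - 1 → a ≡ 1 [MOD 2 ^ (u + 1)] := fun a ha h =>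
    ((Nat.modEq_iff_dvd' ha).mpr ((pow_dvd_pow 2 hlt).trans h)).symm
  have hn : n ≡ 1 [MOD 2 ^ (u + 1)] := by
    refine modEq_of_dvd n hc.1.le (pow_padicValNat_dvd.trans ?_)
    exact carmichaelLambda_eq_carmichael hc.ne_zero ▸ hc.carmichael_dvd_sub_one
  have hothers : ∀ p ∈ n.primeFactors.erase q, p ≡ 1 [MOD 2 ^ (u + 1)] := fun p hp =>
    modEq_of_dvd p (Nat.prime_of_mem_primeFactors (Finset.mem_of_mem_erase hp)).one_le
      (hrest p (Finset.mem_of_mem_erase hp) (Finset.ne_of_mem_erase hp) ▸ pow_padicValNat_dvd)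
  have hq1 : q ≡ 1 [MOD 2 ^ (u + 1)] := by
    refine modEq_one_of_mul_prod_modEq_one hothers ?_
    rwa [Finset.mul_prod_erase _ (fun p => p) hq, Nat.prod_primeFactors_of_squarefree hc.squarefree]
  have := (padicValNat_dvd_iff_le (by have := hqp.two_le; omega)).mp
    ((Nat.modEq_iff_dvd' hqp.one_le).mp hq1.symm)
  omega

end IsCarmichael

/-- For a Carmichael number with `k` prime factors, the number `h` of prime factors `p`
with `v₂(p - 1) = v₂(λ(n))` satisfies `h ≥ 1` and `h ≠ k - 1`. -/
theorem h_ne_k_sub_one (n : ℕ) (hc : IsCarmichael n)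
    (h k : ℕ) (hk : k = n.primeFactors.card)
    (hh : h = (n.primeFactors.filter
      (fun p => padicValNat 2 (p - 1) = padicValNat 2 (carmichaelLambda n))).card) :
    1 ≤ h ∧ h ≠ k - 1 := by
  subst hk hh
  set S := n.primeFactors
  set P := fun p => padicValNat 2 (p - 1) = padicValNat 2 (carmichaelLambda n)
  have hpos : 0 < (S.filter P).card := by
    obtain ⟨p, hpS, hp⟩ := Finset.exists_mem_eq_sup S (Nat.nonempty_primeFactors.mpr hc.1)
      fun p => padicValNat 2 (p - 1)
    exact Finset.card_pos.mpr
      ⟨p, Finset.mem_filter.mpr ⟨hpS, show _ = _ by rw [hc.padicValNat_two_carmichaelLambda, hp]⟩⟩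
  refine ⟨hpos, fun hcard => ?_⟩
  change (S.filter P).card = S.card - 1 at hcard
  obtain ⟨q, hq⟩ : ∃ q, S.filter (¬ P ·) = {q} := by
    apply Finset.card_eq_one.mp
    have := Finset.card_filter_add_card_filter_not (s := S) P
    omega
  have hqS : q ∈ S.filter (¬ P ·) := hq ▸ Finset.mem_singleton_self q
  rw [Finset.mem_filter] at hqS
  refine hqS.2 (hc.padicValNat_two_sub_one_eq_of_forall_ne hqS.1 fun p hpS hpq => ?_)
  by_contra hp
  exact hpq (Finset.mem_singleton.mp (hq ▸ Finset.mem_filter.mpr ⟨hpS, hp⟩))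
end

section
/- Let n_1 and n_2 be coprime Carmichael numbers, both of even index (class A), and suppose the product n = n_1 n_2 is a Carmichael number. If min{v_2(n_1 − 1), v_2(n_2 − 1)} > max{v_2(λ(n_1)), v_2(λ(n_2))}, then n has even index (is in class A). -/
open scoped Classical

lemma carmichael_pow_mem_iff (n ℓ : ℕ) [NeZero n] :
    (∀ a : ℕ, Nat.Coprime a n → a ^ ℓ ≡ 1 [MOD n]) ↔ ∀ u : (ZMod n)ˣ, u ^ ℓ = 1 := by
  constructor
  · intro h u
    have hc := ZMod.val_coe_unit_coprime u
    have := h _ hc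
    rw [← ZMod.natCast_eq_natCast_iff] at this
    push_cast at this
    rw [ZMod.natCast_val, ZMod.cast_id] at this
    ext
    push_cast
    exact this
  · intro h a ha
    have := h (ZMod.unitOfCoprime a ha)
    have h2 : ((a : ZMod n)) ^ ℓ = 1 := by
      have h3 : ((ZMod.unitOfCoprime a ha : (ZMod n)ˣ) : ZMod n) ^ ℓ = 1 := by
        rw [← Units.val_pow_eq_pow_val, this, Units.val_one]
      simpa [ZMod.coe_unitOfCoprime] using h3
    rw [← ZMod.natCast_eq_natCast_iff]
    push_cast
    exact h2

lemma carmichaelLambda_eq_exponent (n : ℕ) (hn : 1 < n) :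
    carmichaelLambda n = Monoid.exponent (ZMod n)ˣ := by
  have : NeZero n := ⟨by omega⟩
  have hpos : 0 < Monoid.exponent (ZMod n)ˣ :=
    Monoid.ExponentExists.of_finite.exponent_pos
  have hmem : Monoid.exponent (ZMod n)ˣ ∈
      {ℓ : ℕ | 0 < ℓ ∧ ∀ a : ℕ, Nat.Coprime a n → a ^ ℓ ≡ 1 [MOD n]} :=
    ⟨hpos, (carmichael_pow_mem_iff n _).2 fun u => Monoid.pow_exponent_eq_one u⟩
  have hle : carmichaelLambda n ≤ Monoid.exponent (ZMod n)ˣ := Nat.sInf_le hmem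
  have hself : carmichaelLambda n ∈
      {ℓ : ℕ | 0 < ℓ ∧ ∀ a : ℕ, Nat.Coprime a n → a ^ ℓ ≡ 1 [MOD n]} :=
    Nat.sInf_mem ⟨_, hmem⟩
  have hdvd : Monoid.exponent (ZMod n)ˣ ∣ carmichaelLambda n :=
    Monoid.exponent_dvd_of_forall_pow_eq_one ((carmichael_pow_mem_iff n _).1 hself.2)
  exact Nat.dvd_antisymm (hle.antisymm (Nat.le_of_dvd hself.1 hdvd) ▸ dvd_rfl) hdvd

lemma carmichaelLambda_dvd (n ℓ : ℕ) (hn : 1 < n)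
    (h : ∀ a : ℕ, Nat.Coprime a n → a ^ ℓ ≡ 1 [MOD n]) :
    carmichaelLambda n ∣ ℓ := by
  have : NeZero n := ⟨by omega⟩
  rw [carmichaelLambda_eq_exponent n hn]
  exact Monoid.exponent_dvd_of_forall_pow_eq_one ((carmichael_pow_mem_iff n ℓ).1 h)

lemma carmichaelLambda_spec (n : ℕ) (hn : IsCarmichael n) :
    0 < carmichaelLambda n ∧
      ∀ a : ℕ, Nat.Coprime a n → a ^ carmichaelLambda n ≡ 1 [MOD n] :=
  Nat.sInf_mem (⟨n - 1, Nat.sub_pos_of_lt hn.1, hn.2.2⟩ :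
    Set.Nonempty {ℓ : ℕ | 0 < ℓ ∧ ∀ a : ℕ, Nat.Coprime a n → a ^ ℓ ≡ 1 [MOD n]})

/-- If `n₁, n₂` are coprime class-A Carmichael numbers whose product is a Carmichael
number, and `min{v₂(n₁-1), v₂(n₂-1)} > max{v₂(λ(n₁)), v₂(λ(n₂))}`, then the product
has even index (is in class A). -/
theorem product_classA_of_classA (n₁ n₂ : ℕ)
    (hc₁ : IsCarmichael n₁) (hc₂ : IsCarmichael n₂) (hcop : Nat.Coprime n₁ n₂)
    (he₁ : Even ((n₁ - 1) / carmichaelLambda n₁))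
    (he₂ : Even ((n₂ - 1) / carmichaelLambda n₂))
    (hn : IsCarmichael (n₁ * n₂))
    (hv : min (padicValNat 2 (n₁ - 1)) (padicValNat 2 (n₂ - 1)) >
      max (padicValNat 2 (carmichaelLambda n₁)) (padicValNat 2 (carmichaelLambda n₂))) :
    Even ((n₁ * n₂ - 1) / carmichaelLambda (n₁ * n₂)) := by
  have hn₁ : 1 < n₁ := hc₁.1
  have hn₂ : 1 < n₂ := hc₂.1
  obtain ⟨hl1pos, hl1⟩ := carmichaelLambda_spec n₁ hc₁
  obtain ⟨hl2pos, hl2⟩ := carmichaelLambda_spec n₂ hc₂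
  set l1 := carmichaelLambda n₁
  set l2 := carmichaelLambda n₂
  set L := Nat.lcm l1 l2 with hL
  have hLpos : 0 < L := Nat.pos_of_ne_zero (Nat.lcm_ne_zero hl1pos.ne' hl2pos.ne')
  -- the lambda of the product divides L
  have hLworks : ∀ a : ℕ, Nat.Coprime a (n₁ * n₂) → a ^ L ≡ 1 [MOD n₁ * n₂] := by
    intro a ha
    refine (Nat.modEq_and_modEq_iff_modEq_mul hcop).1 ⟨?_, ?_⟩
    · obtain ⟨k, hk⟩ := Nat.dvd_lcm_left l1 l2
      have := (hl1 a (Nat.Coprime.coprime_dvd_right (dvd_mul_right n₁ n₂) ha)).pow k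
      rwa [← pow_mul, one_pow, ← hk] at this
    · obtain ⟨k, hk⟩ := Nat.dvd_lcm_right l1 l2
      have := (hl2 a (Nat.Coprime.coprime_dvd_right (dvd_mul_left n₂ n₁) ha)).pow k
      rwa [← pow_mul, one_pow, ← hk] at this
  have hprod : 1 < n₁ * n₂ := hn.1
  have hdvdL : carmichaelLambda (n₁ * n₂) ∣ L :=
    carmichaelLambda_dvd (n₁ * n₂) L hprod hLworks
  obtain ⟨hlpos, _⟩ := carmichaelLambda_spec (n₁ * n₂) hn
  set lam := carmichaelLambda (n₁ * n₂)
  have hdvdn : lam ∣ n₁ * n₂ - 1 :=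
    carmichaelLambda_dvd (n₁ * n₂) (n₁ * n₂ - 1) hprod hn.2.2
  -- 2-adic valuations
  haveI : Fact (Nat.Prime 2) := ⟨Nat.prime_two⟩
  set m := min (padicValNat 2 (n₁ - 1)) (padicValNat 2 (n₂ - 1))
  set M := max (padicValNat 2 (carmichaelLambda n₁)) (padicValNat 2 (carmichaelLambda n₂))
  have hne₁ : n₁ - 1 ≠ 0 := by omega
  have hne₂ : n₂ - 1 ≠ 0 := by omega
  have hnen : n₁ * n₂ - 1 ≠ 0 := by omega
  -- 2^m divides n₁*n₂ - 1
  have hd₁ : (2 : ℕ) ^ m ∣ n₁ - 1 := by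
    rw [padicValNat_dvd_iff_le hne₁]; exact min_le_left _ _
  have hd₂ : (2 : ℕ) ^ m ∣ n₂ - 1 := by
    rw [padicValNat_dvd_iff_le hne₂]; exact min_le_right _ _
  have hdn : (2 : ℕ) ^ m ∣ n₁ * n₂ - 1 := by
    have key : n₁ * n₂ - 1 = (n₁ - 1) * n₂ + (n₂ - 1) := by
      have h1 : 1 ≤ n₁ := by omega
      have h2 : 1 ≤ n₂ := by omega
      have : (n₁ - 1) * n₂ = n₁ * n₂ - n₂ := by
        rw [Nat.sub_mul, one_mul]
      rw [this]
      have hle : n₂ ≤ n₁ * n₂ := Nat.le_mul_of_pos_left n₂ (by omega)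
      omega
    rw [key]
    exact dvd_add (Dvd.dvd.mul_right hd₁ n₂) hd₂
  have hvn : m ≤ padicValNat 2 (n₁ * n₂ - 1) := (padicValNat_dvd_iff_le hnen).1 hdn
  -- v₂(lam) ≤ M
  have hvL : padicValNat 2 L = M := by
    have h0 := Nat.factorization_lcm hl1pos.ne' hl2pos.ne'
    have h2 : (Nat.lcm l1 l2).factorization 2 =
        (l1.factorization ⊔ l2.factorization) 2 := by rw [h0]
    rw [Finsupp.sup_apply] at h2
    rw [Nat.factorization_def _ Nat.prime_two, Nat.factorization_def _ Nat.prime_two,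
      Nat.factorization_def _ Nat.prime_two] at h2
    exact h2
  have hvlam : padicValNat 2 lam ≤ M := by
    obtain ⟨k, hk⟩ := hdvdL
    have hkne : k ≠ 0 := by rintro rfl; simp at hk; omega
    rw [← hvL, hk, padicValNat.mul hlpos.ne' hkne]
    omega
  -- conclude
  obtain ⟨q, hq⟩ := hdvdn
  have hqne : q ≠ 0 := by rintro rfl; simp at hq; omega
  have hval : padicValNat 2 (n₁ * n₂ - 1) = padicValNat 2 lam + padicValNat 2 q := by
    rw [hq, padicValNat.mul hlpos.ne' hqne]
  have hq2 : 1 ≤ padicValNat 2 q := by omega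
  have h2q : 2 ∣ q := dvd_of_one_le_padicValNat hq2
  have : (n₁ * n₂ - 1) / lam = q := by rw [hq, Nat.mul_div_cancel_left _ hlpos]
  rw [this]
  exact (even_iff_two_dvd).2 h2q
end

section
/- Let n_1 and n_2 be coprime Carmichael numbers, both of odd index (class B). If v_2(n_1 − 1) = v_2(n_2 − 1) and the product n = n_1 n_2 is a Carmichael number, then n has even index (is in class A); and if v_2(n_1 − 1) ≠ v_2(n_2 − 1), then n = n_1 n_2 is not a Carmichael number. -/
open scoped Classical

section CL
variable {n : ℕ}

lemma cl_set_nonempty (hn : 0 < n) :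
    (Nat.totient n) ∈ {ℓ : ℕ | 0 < ℓ ∧ ∀ a : ℕ, Nat.Coprime a n → a ^ ℓ ≡ 1 [MOD n]} :=
  ⟨Nat.totient_pos.2 hn, fun _ ha => Nat.ModEq.pow_totient ha⟩

lemma cl_mem (hn : 0 < n) : 0 < carmichaelLambda n ∧
    ∀ a : ℕ, Nat.Coprime a n → a ^ carmichaelLambda n ≡ 1 [MOD n] :=
  Nat.sInf_mem ⟨_, cl_set_nonempty hn⟩

lemma cl_pos (hn : 0 < n) : 0 < carmichaelLambda n := (cl_mem hn).1

lemma cl_pow (hn : 0 < n) {a : ℕ} (ha : Nat.Coprime a n) :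
    a ^ carmichaelLambda n ≡ 1 [MOD n] := (cl_mem hn).2 a ha

lemma cl_dvd (hn : 0 < n) {ℓ : ℕ}
    (h : ∀ a : ℕ, Nat.Coprime a n → a ^ ℓ ≡ 1 [MOD n]) : carmichaelLambda n ∣ ℓ := by
  set L := carmichaelLambda n with hL
  have hLpos := cl_pos hn
  have hr : ∀ a : ℕ, Nat.Coprime a n → a ^ (ℓ % L) ≡ 1 [MOD n] := by
    intro a ha
    have h1 : a ^ (L * (ℓ / L)) ≡ 1 [MOD n] := by
      rw [pow_mul]
      simpa using (cl_pow hn ha).pow (ℓ / L)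
    have h2 : a ^ ℓ = a ^ (L * (ℓ / L)) * a ^ (ℓ % L) := by
      rw [← pow_add, Nat.div_add_mod]
    have := (h a ha).symm.trans (h2 ▸ (Nat.ModEq.mul h1 (Nat.ModEq.refl _)))
    simpa using this.symm
  by_contra hdvd
  have hrpos : 0 < ℓ % L := Nat.pos_of_ne_zero fun h0 => hdvd (Nat.dvd_of_mod_eq_zero h0)
  have : L ≤ ℓ % L := Nat.sInf_le ⟨hrpos, hr⟩
  exact absurd (Nat.mod_lt ℓ hLpos) (not_lt.2 this)

end CL

lemma dvd_pow_modEq {a d ℓ n : ℕ} (h : a ^ d ≡ 1 [MOD n]) (hd : d ∣ ℓ) :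
    a ^ ℓ ≡ 1 [MOD n] := by
  obtain ⟨c, rfl⟩ := hd
  rw [pow_mul]
  simpa using h.pow c

lemma carmichael_two_lt {n : ℕ} (h : IsCarmichael n) : 2 < n := by
  rcases h with ⟨h1, h2, -⟩
  rcases Nat.lt_or_ge n 3 with h3 | h3
  · interval_cases n
    exact absurd Nat.prime_two h2
  · omega

lemma carmichael_odd {n : ℕ} (h : IsCarmichael n) : Odd n := by
  have h2 := carmichael_two_lt h
  by_contra heven
  rw [Nat.not_odd_iff_even] at heven
  have hcop : Nat.Coprime (n - 1) n := by
    have hd := Nat.dvd_sub (Nat.gcd_dvd_right (n-1) n) (Nat.gcd_dvd_left (n-1) n)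
    have h1 : n - (n - 1) = 1 := by omega
    rw [h1] at hd
    exact Nat.dvd_one.mp hd
  have hfer := h.2.2 _ hcop
  haveI : NeZero n := ⟨by omega⟩
  have hz : ((n - 1 : ℕ) : ZMod n) = -1 := by
    have : ((n - 1 : ℕ) : ZMod n) = (n : ZMod n) - 1 := by
      rw [Nat.cast_sub (by omega)]; simp
    simp [this, ZMod.natCast_self]
  have hcast : (((n-1) ^ (n-1) : ℕ) : ZMod n) = ((1 : ℕ) : ZMod n) :=
    (ZMod.natCast_eq_natCast_iff _ _ _).2 hfer
  rw [Nat.cast_pow, hz, Nat.cast_one, Odd.neg_one_pow (Nat.Even.sub_odd (by omega) heven odd_one)] at hcast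
  have : ((2 : ℕ) : ZMod n) = 0 := by push_cast; linear_combination -hcast
  rw [ZMod.natCast_eq_zero_iff] at this
  exact absurd (Nat.le_of_dvd two_pos this) (by omega)

lemma carmichael_lambda_dvd {n : ℕ} (h : IsCarmichael n) : carmichaelLambda n ∣ n - 1 :=
  cl_dvd (by have := carmichael_two_lt h; omega) h.2.2

lemma cl_dvd_mul_left {n₁ n₂ : ℕ} (h1 : 0 < n₁) (h2 : 0 < n₂) (hcop : Nat.Coprime n₁ n₂) :
    carmichaelLambda n₁ ∣ carmichaelLambda (n₁ * n₂) := by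
  apply cl_dvd h1
  intro a ha
  obtain ⟨b, hb1, hb2⟩ := Nat.chineseRemainder hcop a 1
  have hba : Nat.Coprime b n₁ := by
    have h := Nat.ModEq.gcd_eq hb1
    unfold Nat.Coprime at *; rw [h]; exact ha
  have hbb : Nat.Coprime b n₂ := by
    have h := Nat.ModEq.gcd_eq hb2
    unfold Nat.Coprime at *; rw [h]; exact Nat.coprime_one_left _
  have hb : Nat.Coprime b (n₁ * n₂) := Nat.Coprime.mul_right hba hbb
  have h3 : b ^ carmichaelLambda (n₁ * n₂) ≡ 1 [MOD n₁] :=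
    (cl_pow (Nat.mul_pos h1 h2) hb).of_dvd (dvd_mul_right _ _)
  exact ((hb1.symm.pow _).trans h3)

lemma cl_mul_dvd_lcm {n₁ n₂ : ℕ} (h1 : 0 < n₁) (h2 : 0 < n₂) (hcop : Nat.Coprime n₁ n₂) :
    carmichaelLambda (n₁ * n₂) ∣ Nat.lcm (carmichaelLambda n₁) (carmichaelLambda n₂) := by
  apply cl_dvd (Nat.mul_pos h1 h2)
  intro a ha
  have ha1 : a.Coprime n₁ := Nat.Coprime.coprime_dvd_right (dvd_mul_right _ _) ha
  have ha2 : a.Coprime n₂ := Nat.Coprime.coprime_dvd_right (dvd_mul_left _ _) ha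
  exact (Nat.modEq_and_modEq_iff_modEq_mul hcop).1
    ⟨dvd_pow_modEq (cl_pow h1 ha1) (Nat.dvd_lcm_left _ _),
     dvd_pow_modEq (cl_pow h2 ha2) (Nat.dvd_lcm_right _ _)⟩

lemma classB_val {n : ℕ} (hc : IsCarmichael n) (ho : Odd ((n - 1) / carmichaelLambda n)) :
    padicValNat 2 (carmichaelLambda n) = padicValNat 2 (n - 1) := by
  have h2 := carmichael_two_lt hc
  have hd := carmichael_lambda_dvd hc
  have hL := cl_pos (n := n) (by omega)
  haveI : Fact (Nat.Prime 2) := ⟨Nat.prime_two⟩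
  set i := (n - 1) / carmichaelLambda n with hi
  have heq : n - 1 = carmichaelLambda n * i := (Nat.mul_div_cancel' hd).symm
  have hi0 : i ≠ 0 := by intro h0; rw [h0, mul_zero] at heq; omega
  have hiodd : ¬ (2 ∣ i) := by rw [Nat.odd_iff] at ho; omega
  conv_rhs => rw [heq]
  rw [padicValNat.mul (by omega) hi0, padicValNat.eq_zero_of_not_dvd hiodd, add_zero]

lemma exists_odd_factor {m : ℕ} (hm : m ≠ 0) :
    ∃ u, Odd u ∧ m = 2 ^ padicValNat 2 m * u := by
  haveI : Fact (Nat.Prime 2) := ⟨Nat.prime_two⟩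
  refine ⟨m / 2 ^ padicValNat 2 m, ?_, (Nat.mul_div_cancel' pow_padicValNat_dvd).symm⟩
  have hmu : m = 2 ^ padicValNat 2 m * (m / 2 ^ padicValNat 2 m) :=
    (Nat.mul_div_cancel' pow_padicValNat_dvd).symm
  rw [Nat.odd_iff]
  by_contra h
  have h2 : 2 ∣ m / 2 ^ padicValNat 2 m := by omega
  obtain ⟨c, hc⟩ := h2
  have : 2 ^ (padicValNat 2 m + 1) ∣ m := ⟨c, by rw [pow_succ]; rw [hc] at hmu; linarith [hmu]⟩
  exact pow_succ_padicValNat_not_dvd hm this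

lemma case2_helper {n₁ n₂ : ℕ} (hc₁ : IsCarmichael n₁) (hc₂ : IsCarmichael n₂)
    (hcop : Nat.Coprime n₁ n₂) (ho₂ : Odd ((n₂ - 1) / carmichaelLambda n₂))
    (hlt : padicValNat 2 (n₁ - 1) < padicValNat 2 (n₂ - 1)) : ¬ IsCarmichael (n₁ * n₂) := by
  intro hC
  haveI : Fact (Nat.Prime 2) := ⟨Nat.prime_two⟩
  have h21 := carmichael_two_lt hc₁
  have h22 := carmichael_two_lt hc₂
  set e₁ := padicValNat 2 (n₁ - 1) with he₁
  set e₂ := padicValNat 2 (n₂ - 1) with he₂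
  have hd1 : (2 : ℕ) ^ (e₁ + 1) ∣ carmichaelLambda n₂ := by
    have h1 : (2 : ℕ) ^ e₂ ∣ carmichaelLambda n₂ := by
      rw [he₂, ← classB_val hc₂ ho₂]
      exact pow_padicValNat_dvd
    exact (pow_dvd_pow 2 (by omega : e₁ + 1 ≤ e₂)).trans h1
  have hlam2 : carmichaelLambda n₂ ∣ carmichaelLambda (n₁ * n₂) := by
    have := cl_dvd_mul_left (by omega : 0 < n₂) (by omega : 0 < n₁) hcop.symm
    rwa [mul_comm] at this
  have hd2 : (2 : ℕ) ^ (e₁ + 1) ∣ n₁ * n₂ - 1 :=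
    (hd1.trans hlam2).trans (carmichael_lambda_dvd hC)
  have hd3 : (2 : ℕ) ^ (e₁ + 1) ∣ n₂ - 1 :=
    (pow_dvd_pow 2 (by omega)).trans pow_padicValNat_dvd
  have key : n₁ * n₂ - 1 - (n₂ - 1) = (n₁ - 1) * n₂ := by
    have h := Nat.sub_mul n₁ 1 n₂
    have hle : n₂ ≤ n₁ * n₂ := Nat.le_mul_of_pos_left _ (by omega)
    omega
  have hd4 : (2 : ℕ) ^ (e₁ + 1) ∣ (n₁ - 1) * n₂ := key ▸ Nat.dvd_sub hd2 hd3
  have hodd2 := carmichael_odd hc₂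
  have hcop2 : Nat.Coprime (2 ^ (e₁ + 1)) n₂ := by
    apply Nat.Coprime.pow_left
    rw [Nat.Prime.coprime_iff_not_dvd Nat.prime_two, ← even_iff_two_dvd,
      ← Nat.not_odd_iff_even, not_not]
    exact hodd2
  have hd5 : (2 : ℕ) ^ (e₁ + 1) ∣ n₁ - 1 := hcop2.dvd_of_dvd_mul_right hd4
  have := (padicValNat_dvd_iff_le (by omega : n₁ - 1 ≠ 0)).1 hd5
  omega


/-- For coprime class-B Carmichael numbers `n₁, n₂`: if `v₂(n₁-1) = v₂(n₂-1)` and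
`n₁ n₂` is a Carmichael number then it has even index (is in class A); and if
`v₂(n₁-1) ≠ v₂(n₂-1)` then `n₁ n₂` is not a Carmichael number. -/
theorem product_of_classB (n₁ n₂ : ℕ)
    (hc₁ : IsCarmichael n₁) (hc₂ : IsCarmichael n₂) (hcop : Nat.Coprime n₁ n₂)
    (ho₁ : Odd ((n₁ - 1) / carmichaelLambda n₁))
    (ho₂ : Odd ((n₂ - 1) / carmichaelLambda n₂)) :
    (padicValNat 2 (n₁ - 1) = padicValNat 2 (n₂ - 1) → IsCarmichael (n₁ * n₂) →
      Even ((n₁ * n₂ - 1) / carmichaelLambda (n₁ * n₂))) ∧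
    (padicValNat 2 (n₁ - 1) ≠ padicValNat 2 (n₂ - 1) → ¬ IsCarmichael (n₁ * n₂)) := by
  haveI : Fact (Nat.Prime 2) := ⟨Nat.prime_two⟩
  have h21 := carmichael_two_lt hc₁
  have h22 := carmichael_two_lt hc₂
  have hodd1 := carmichael_odd hc₁
  have hodd2 := carmichael_odd hc₂
  constructor
  · intro he hC
    set e := padicValNat 2 (n₁ - 1) with hee
    -- e ≥ 1
    have he1 : 1 ≤ e := by
      have : (2:ℕ) ^ 1 ∣ n₁ - 1 := by
        rw [pow_one, ← even_iff_two_dvd]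
        exact Nat.Odd.sub_odd hodd1 odd_one
      exact (padicValNat_dvd_iff_le (by omega : n₁ - 1 ≠ 0)).1 this
    obtain ⟨u, hu, hud⟩ := exists_odd_factor (by omega : n₁ - 1 ≠ 0)
    obtain ⟨w, hw, hwd⟩ := exists_odd_factor (by omega : n₂ - 1 ≠ 0)
    rw [← hee] at hud
    rw [← he] at hwd
    -- 2^(e+1) ∣ n₁*n₂ - 1
    have key : n₁ * n₂ - 1 = (n₁ - 1) * n₂ + (n₂ - 1) := by
      have h := Nat.sub_mul n₁ 1 n₂
      have hle : n₂ ≤ n₁ * n₂ := Nat.le_mul_of_pos_left _ (by omega)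
      omega
    obtain ⟨c, hcc⟩ := (hu.mul hodd2).add_odd hw
    have hbig : (2:ℕ) ^ (e + 1) ∣ n₁ * n₂ - 1 := by
      refine ⟨c, ?_⟩
      rw [key, hud, hwd]
      have : u * n₂ + w = 2 * c := by omega
      calc 2 ^ e * u * n₂ + 2 ^ e * w = 2 ^ e * (u * n₂ + w) := by ring
        _ = 2 ^ e * (2 * c) := by rw [this]
        _ = 2 ^ (e + 1) * c := by ring
    -- ¬ 2^(e+1) ∣ λ(n₁ n₂)
    have hL1 := cl_pos (n := n₁) (by omega)
    have hL2 := cl_pos (n := n₂) (by omega)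
    obtain ⟨s₁, hs₁, hs₁d⟩ := exists_odd_factor (by omega : carmichaelLambda n₁ ≠ 0)
    obtain ⟨s₂, hs₂, hs₂d⟩ := exists_odd_factor (by omega : carmichaelLambda n₂ ≠ 0)
    rw [classB_val hc₁ ho₁, ← hee] at hs₁d
    rw [classB_val hc₂ ho₂, ← he] at hs₂d
    have hlcm : Nat.lcm (carmichaelLambda n₁) (carmichaelLambda n₂) = 2 ^ e * Nat.lcm s₁ s₂ := by
      rw [hs₁d, hs₂d, Nat.lcm_mul_left]
    have hlcmodd : ¬ (2 ∣ Nat.lcm s₁ s₂) := by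
      intro h2
      have hm : Nat.lcm s₁ s₂ ∣ s₁ * s₂ :=
        Nat.lcm_dvd (dvd_mul_right _ _) (dvd_mul_left _ _)
      rcases (Nat.Prime.dvd_mul Nat.prime_two).1 (h2.trans hm) with h | h
      · rw [Nat.odd_iff] at hs₁; omega
      · rw [Nat.odd_iff] at hs₂; omega
    have hnd : ¬ (2:ℕ) ^ (e + 1) ∣ carmichaelLambda (n₁ * n₂) := by
      intro hd
      have := hd.trans (cl_mul_dvd_lcm (by omega : 0 < n₁) (by omega : 0 < n₂) hcop)
      rw [hlcm, pow_succ] at this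
      exact hlcmodd ((Nat.mul_dvd_mul_iff_left (pow_pos two_pos e)).1 this)
    -- conclude
    have hmul1 : 1 < n₁ * n₂ := by
      have : 2 * 2 ≤ n₁ * n₂ := Nat.mul_le_mul (by omega) (by omega)
      omega
    have hLpos := cl_pos (n := n₁ * n₂) (by omega)
    have hdvd := carmichael_lambda_dvd hC
    set L := carmichaelLambda (n₁ * n₂) with hLL
    set i := (n₁ * n₂ - 1) / L with hi
    have heq : n₁ * n₂ - 1 = L * i := (Nat.mul_div_cancel' hdvd).symm
    have hi0 : i ≠ 0 := by intro h0; rw [h0, mul_zero] at heq; omega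
    have hv1 : e + 1 ≤ padicValNat 2 (n₁ * n₂ - 1) :=
      (padicValNat_dvd_iff_le (by omega : n₁ * n₂ - 1 ≠ 0)).1 hbig
    have hv2 : ¬ (e + 1 ≤ padicValNat 2 L) := fun h =>
      hnd ((padicValNat_dvd_iff_le (by omega : L ≠ 0)).2 h)
    rw [heq, padicValNat.mul (by omega) hi0] at hv1
    have : 1 ≤ padicValNat 2 i := by omega
    have h2i : (2:ℕ) ^ 1 ∣ i := (padicValNat_dvd_iff_le hi0).2 this
    rw [pow_one] at h2i
    exact even_iff_two_dvd.2 h2i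
  · intro hne
    rcases Nat.lt_or_ge (padicValNat 2 (n₁ - 1)) (padicValNat 2 (n₂ - 1)) with h | h
    · exact case2_helper hc₁ hc₂ hcop ho₂ h
    · have hlt : padicValNat 2 (n₂ - 1) < padicValNat 2 (n₁ - 1) := by omega
      have := case2_helper hc₂ hc₁ hcop.symm ho₁ hlt
      rwa [mul_comm] at this
end
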